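/- Let F be an algebraically closed field and D a positive integer. For any choice of polynomials g_1, ..., g_n in F[x_1,...,x_n], each of degree at most D-1, the affine variety V(x_1^D - g_1, x_2^D - g_2, ..., x_n^D - g_n) in F^n has dimension zero (equivalently, it is a finite nonempty set). -/

import Mathlib

/-!
Put `f i = X i ^ D - g i` and `B = K[f]`. Since `deg g i < D`, rewriting `X i ^ D` as `f i + g i`
lowers the degree, so the monomials with all exponents below `D` span `K[X]` as a `B`-module and
`K[X]` is finite over `B`. Comparing transcendence degrees, the `f i` are then algebraically
independent, so `B` is a polynomial ring in them and "constant coefficient in the `f i`" is a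
`K`-algebra map `φ : B → K`. At a common zero `x`, evaluation on `B` is `φ`, so applying it to a
monic equation of `X i` over `B` leaves finitely many choices for `x i`. Lying over `ker φ` gives a
prime of `K[X]` containing every `f i`, and the Nullstellensatz turns it into a common zero.
-/

open MvPolynomial

namespace MvPolynomial

section Reduction

variable {σ R : Type*} [CommRing R]

def reducedMonomials (σ R : Type*) [CommRing R] (D : ℕ) : Set (MvPolynomial σ R) :=
  (fun α => monomial α 1) '' {α | ∀ i, α i < D}

theorem finite_reducedMonomials [Finite σ] (D : ℕ) : (reducedMonomials σ R D).Finite := by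
  classical
  refine Set.Finite.image _ ((Set.finite_Iic (Finsupp.equivFunOnFinite.symm fun _ => D)).subset ?_)
  intro α hα i
  exact (hα i).le

variable {D : ℕ} {g : σ → MvPolynomial σ R}

theorem monomial_eq_X_pow_sub_mul_add_mul {α : σ →₀ ℕ} {i : σ} (hi : D ≤ α i) (c : R) :
    monomial α c = (X i ^ D - g i) * monomial (α - Finsupp.single i D) c +
      g i * monomial (α - Finsupp.single i D) c := by
  rw [← add_mul, sub_add_cancel, X_pow_eq_monomial, monomial_mul, one_mul,
    add_tsub_cancel_of_le (Finsupp.single_le_iff.mpr hi)]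

theorem mem_span_reducedMonomials (hD : 1 ≤ D) (hg : ∀ i, (g i).totalDegree ≤ D - 1)
    (p : MvPolynomial σ R) :
    p ∈ Submodule.span (Algebra.adjoin R (Set.range fun i => X i ^ D - g i))
      (reducedMonomials σ R D) := by
  set M := Submodule.span (Algebra.adjoin R (Set.range fun i => X i ^ D - g i))
      (reducedMonomials σ R D)
  induction hN : p.totalDegree using Nat.strong_induction_on generalizing p with
  | _ N ih =>
  have hdeg : ∀ q : MvPolynomial σ R, q.totalDegree < N → q ∈ M := fun q hq => ih _ hq q rfl
  rw [p.as_sum]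
  refine Submodule.sum_mem _ fun α hα => ?_
  have hαN : α.degree ≤ N := hN ▸ le_totalDegree hα
  by_cases hred : ∀ i, α i < D
  · rw [← mul_one (coeff α p), ← smul_eq_mul, ← smul_monomial]
    exact Submodule.smul_of_tower_mem _ _ (Submodule.subset_span ⟨α, hred, rfl⟩)
  push Not at hred
  obtain ⟨i, hi⟩ := hred
  set β := α - Finsupp.single i D
  have hβ : β.degree + D = α.degree := by
    rw [← Finsupp.degree_single i D, ← map_add,
      tsub_add_cancel_of_le (Finsupp.single_le_iff.mpr hi)]
  have hβle : (monomial β (coeff α p)).totalDegree ≤ β.degree := totalDegree_monomial_le β _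
  rw [monomial_eq_X_pow_sub_mul_add_mul hi]
  refine M.add_mem ?_ (hdeg _ ?_)
  · have hf : X i ^ D - g i ∈ Algebra.adjoin R (Set.range fun i => X i ^ D - g i) :=
      Algebra.subset_adjoin ⟨i, rfl⟩
    exact M.smul_mem ⟨_, hf⟩ (hdeg _ (hβle.trans_lt (by omega)))
  · calc (g i * monomial β (coeff α p)).totalDegree
        ≤ (g i).totalDegree + (monomial β (coeff α p)).totalDegree := totalDegree_mul _ _
      _ ≤ (D - 1) + β.degree := add_le_add (hg i) hβle
      _ < N := by omega

theorem module_finite_adjoin_X_pow_sub [Finite σ] (hD : 1 ≤ D)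
    (hg : ∀ i, (g i).totalDegree ≤ D - 1) :
    Module.Finite (Algebra.adjoin R (Set.range fun i => X i ^ D - g i)) (MvPolynomial σ R) :=
  ⟨Submodule.fg_def.mpr ⟨_, finite_reducedMonomials D,
    Submodule.eq_top_iff'.mpr (mem_span_reducedMonomials hD hg)⟩⟩

end Reduction

section Field

variable {K σ : Type*} [Field K] {f : σ → MvPolynomial σ K}

open Algebra Set

theorem algebraicIndependent_of_finite_adjoin [Finite σ]
    [Module.Finite (adjoin K (range f)) (MvPolynomial σ K)] : AlgebraicIndependent K f :=
  (IsAlgebraic.isTranscendenceBasis_of_lift_le_trdeg_of_finite K f (by simp)).1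

theorem _root_.AlgebraicIndependent.repr_mk_self (hf : AlgebraicIndependent K f) (i : σ) :
    hf.repr ⟨f i, subset_adjoin ⟨i, rfl⟩⟩ = X i :=
  algebraicIndependent_iff_injective_aeval.mp hf (by rw [hf.aeval_repr, aeval_X])

theorem _root_.AlgebraicIndependent.eval_eq_constantCoeff_repr (hf : AlgebraicIndependent K f)
    {x : σ → K} (hx : ∀ i, eval x (f i) = 0) (b : adjoin K (range f)) :
    eval x b = constantCoeff (hf.repr b) := by
  calc eval x b = aeval x (aeval f (hf.repr b)) := by rw [hf.aeval_repr]; rfl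
    _ = aeval (fun i => aeval x (f i)) (hf.repr b) := comp_aeval_apply _ _ _
    _ = constantCoeff (hf.repr b) := by simp [hx]

theorem finite_setOf_eval_eq_zero_of_finite_adjoin [Finite σ]
    [Module.Finite (adjoin K (range f)) (MvPolynomial σ K)] :
    {x : σ → K | ∀ i, eval x (f i) = 0}.Finite := by
  have hf : AlgebraicIndependent K f := algebraicIndependent_of_finite_adjoin
  let φ : adjoin K (range f) →+* K := constantCoeff.comp hf.repr.toRingHom
  have hroot : ∀ i, ∃ q : Polynomial (adjoin K (range f)), q.Monic ∧
      ∀ x ∈ {x : σ → K | ∀ i, eval x (f i) = 0}, (q.map φ).IsRoot (x i) := by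
    intro i
    obtain ⟨q, hmonic, hq⟩ :=
      IsIntegral.isIntegral (R := adjoin K (range f)) (X i : MvPolynomial σ K)
    refine ⟨q, hmonic, fun x hx => ?_⟩
    have hφ : (eval x).comp (algebraMap (adjoin K (range f)) (MvPolynomial σ K)) = φ :=
      RingHom.ext (hf.eval_eq_constantCoeff_repr hx)
    simpa [Polynomial.IsRoot, Polynomial.eval_map, Polynomial.hom_eval₂, hφ] using
      congrArg (eval x) hq
  choose q hmonic hq using hroot
  exact (Finite.pi fun i => Polynomial.finite_setOfPred_isRoot ((hmonic i).map φ).ne_zero).subset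
    fun x hx i _ => hq i x hx

theorem span_range_ne_top_of_finite_adjoin [Finite σ]
    [Module.Finite (adjoin K (range f)) (MvPolynomial σ K)] :
    Ideal.span (range f) ≠ ⊤ := by
  have hf : AlgebraicIndependent K f := algebraicIndependent_of_finite_adjoin
  let φ : adjoin K (range f) →+* K := constantCoeff.comp hf.repr.toRingHom
  have := RingHom.ker_isPrime φ
  obtain ⟨Q, -, hQ, hQφ⟩ := Ideal.exists_ideal_over_prime_of_isIntegral (RingHom.ker φ) ⊥
    (Ideal.comap_bot_le_of_injective _ Subtype.val_injective)
  refine ne_top_of_le_ne_top hQ.ne_top (Ideal.span_le.mpr ?_)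
  rintro _ ⟨i, rfl⟩
  change (⟨f i, subset_adjoin ⟨i, rfl⟩⟩ : adjoin K (range f)) ∈ Q.comap (algebraMap _ _)
  rw [hQφ, RingHom.mem_ker]
  simp [φ, hf.repr_mk_self]

theorem nonempty_setOf_eval_eq_zero_of_span_ne_top [Finite σ] [IsAlgClosed K]
    (h : Ideal.span (range f) ≠ ⊤) :
    {x : σ → K | ∀ i, eval x (f i) = 0}.Nonempty := by
  obtain ⟨M, hM, hfM⟩ := Ideal.exists_le_maximal _ h
  obtain ⟨x, rfl⟩ := eq_vanishingIdeal_singleton_of_isMaximal K hM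
  exact ⟨x, fun i =>
    (mem_vanishingIdeal_singleton_iff x _).mp (hfM (Ideal.subset_span ⟨i, rfl⟩))⟩

end Field

end MvPolynomial

theorem stmt_0 {F : Type*} [Field F] [IsAlgClosed F] (n D : ℕ) (hD : 1 ≤ D)
    (g : Fin n → MvPolynomial (Fin n) F)
    (hg : ∀ i, (g i).totalDegree ≤ D - 1) :
    {x : Fin n → F | ∀ i, eval x (X i ^ D - g i) = 0}.Finite ∧
      {x : Fin n → F | ∀ i, eval x (X i ^ D - g i) = 0}.Nonempty := by
  have := module_finite_adjoin_X_pow_sub hD hg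
  exact ⟨finite_setOf_eval_eq_zero_of_finite_adjoin,
    nonempty_setOf_eval_eq_zero_of_span_ne_top span_range_ne_top_of_finite_adjoin⟩
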